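/- Let X and Y be Banach spaces and x ∈ S_X. Then x is a ∇-point in X if and only if (x,0) is a ∇-point in the ℓ₁-sum X ⊕₁ Y. -/

import Mathlib

open scoped ENNReal

variable {X : Type*} [NormedAddCommGroup X] [NormedSpace ℝ X]

/-- The ballSlice of the closed unit ball of `X` determined by the functional `f` and `α`:
`S(f, α) = {y ∈ B_X : f y > 1 - α}`. -/
def ballSlice (f : X →L[ℝ] ℝ) (α : ℝ) : Set X := {y | ‖y‖ ≤ 1 ∧ 1 - α < f y}

/-- `x` is a Daugavet point: `sup_{y ∈ S} ‖x - y‖ = 2` for every ballSlice `S` of `B_X`. -/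
def IsDaugavetPoint (x : X) : Prop :=
  ‖x‖ = 1 ∧ ∀ (f : X →L[ℝ] ℝ) (α : ℝ), ‖f‖ = 1 → 0 < α →
    ∀ ε > (0 : ℝ), ∃ y ∈ ballSlice f α, 2 - ε < ‖x - y‖

/-- `x` is a `∇`-point: `sup_{y ∈ S} ‖x - y‖ = 2` for every ballSlice `S` of `B_X`
not containing `x`. -/
def IsNablaPoint (x : X) : Prop :=
  ‖x‖ = 1 ∧ ∀ (f : X →L[ℝ] ℝ) (α : ℝ), ‖f‖ = 1 → 0 < α → x ∉ ballSlice f α →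
    ∀ ε > (0 : ℝ), ∃ y ∈ ballSlice f α, 2 - ε < ‖x - y‖

/-- `x` is a `𝔇`-point: `sup_{y ∈ S(f,α)} ‖x - y‖ = 2` for every norm-one functional `f`
supporting `x` (i.e. `f x = 1`) and every `α > 0`. -/
def IsDPoint (x : X) : Prop :=
  ‖x‖ = 1 ∧ ∀ (f : X →L[ℝ] ℝ) (α : ℝ), ‖f‖ = 1 → f x = 1 → 0 < α →
    ∀ ε > (0 : ℝ), ∃ y ∈ ballSlice f α, 2 - ε < ‖x - y‖

/-- `x` is a denting point of `B_X`: it belongs to slices of arbitrarily small diameter. -/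
def IsDentingPoint (x : X) : Prop :=
  ‖x‖ ≤ 1 ∧ ∀ ε > (0 : ℝ), ∃ (f : X →L[ℝ] ℝ) (α : ℝ), ‖f‖ = 1 ∧ 0 < α ∧
    x ∈ ballSlice f α ∧ ∀ y ∈ ballSlice f α, ∀ z ∈ ballSlice f α, ‖y - z‖ < ε

/-- `x` is a strongly exposed point of `B_X`: some norm-one functional `f` with `f x = 1`
generates slices containing `x` of arbitrarily small diameter. -/
def IsStronglyExposedPoint (x : X) : Prop :=
  ‖x‖ = 1 ∧ ∃ f : X →L[ℝ] ℝ, ‖f‖ = 1 ∧ f x = 1 ∧ ∀ ε > (0 : ℝ), ∃ α > (0 : ℝ),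
    ∀ y ∈ ballSlice f α, ∀ z ∈ ballSlice f α, ‖y - z‖ < ε

/-!
The dual of `X ⊕₁ Y` is `X* ⊕∞ Y*`, so a norm-one functional `F` on the sum either has
`‖F|_Y‖` close to `1`, and then its slice contains points `(0, v)` with `‖v‖` close to `1`, at
distance `1 + ‖v‖` from `(x, 0)`; or `‖F|_X‖ = 1`, and the `∇`-property of `x` for the slice of
`F|_X` gives far points `(y, 0)`. Conversely, a slice `S(f, α)` of `B_X` not containing `x`
lifts to the thin slice `S(f ∘ π₁, β)` of the sum: its points `z` have `‖z₂‖ < β`, so `z₁` lies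
in `S(f, α)` and `‖x - z₁‖ ≥ ‖(x, 0) - z‖ - β`.
-/

namespace WithLp

variable {Y Z : Type*} [NormedAddCommGroup Y] [NormedSpace ℝ Y]
  [NormedAddCommGroup Z] [NormedSpace ℝ Z] (p : ℝ≥0∞)

def prodInlL : X →L[ℝ] WithLp p (X × Y) :=
  (prodContinuousLinearEquiv p ℝ X Y).symm.toContinuousLinearMap ∘L .inl ℝ X Y

def prodInrL : Y →L[ℝ] WithLp p (X × Y) :=
  (prodContinuousLinearEquiv p ℝ X Y).symm.toContinuousLinearMap ∘L .inr ℝ X Y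

variable {p}

@[simp]
lemma prodInlL_apply (x : X) : prodInlL (Y := Y) p x = toLp p (x, 0) := rfl

@[simp]
lemma prodInrL_apply (y : Y) : prodInrL (X := X) p y = toLp p (0, y) := rfl

variable [Fact (1 ≤ p)]

lemma norm_prodInlL_le : ‖prodInlL (X := X) (Y := Y) p‖ ≤ 1 :=
  ContinuousLinearMap.opNorm_le_bound _ zero_le_one fun x => by simp

lemma norm_prodInrL_le : ‖prodInrL (X := X) (Y := Y) p‖ ≤ 1 :=
  ContinuousLinearMap.opNorm_le_bound _ zero_le_one fun y => by simp

theorem prod_opNorm_eq_max_of_L1 (F : WithLp 1 (X × Y) →L[ℝ] Z) :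
    ‖F‖ = max ‖F ∘L prodInlL 1‖ ‖F ∘L prodInrL 1‖ := by
  refine le_antisymm (F.opNorm_le_bound (by positivity) fun z => ?_) (max_le ?_ ?_)
  · have hz : z = prodInlL 1 z.fst + prodInrL 1 z.snd := by
      rw [WithLp.ext_iff]; apply Prod.ext <;> simp
    calc ‖F z‖ = ‖(F ∘L prodInlL 1) z.fst + (F ∘L prodInrL 1) z.snd‖ := by
          rw [hz]; simp
      _ ≤ ‖F ∘L prodInlL 1‖ * ‖z.fst‖ + ‖F ∘L prodInrL 1‖ * ‖z.snd‖ :=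
          norm_add_le_of_le ((F ∘L prodInlL 1).le_opNorm _) ((F ∘L prodInrL 1).le_opNorm _)
      _ ≤ max ‖F ∘L prodInlL 1‖ ‖F ∘L prodInrL 1‖ * ‖z‖ := by
          rw [prod_norm_eq_of_L1, mul_add]
          gcongr
          exacts [le_max_left _ _, le_max_right _ _]
  · exact (F.opNorm_comp_le _).trans (mul_le_of_le_one_right (norm_nonneg _) norm_prodInlL_le)
  · exact (F.opNorm_comp_le _).trans (mul_le_of_le_one_right (norm_nonneg _) norm_prodInrL_le)

end WithLp

lemma ballSlice_mono {f : X →L[ℝ] ℝ} {α β : ℝ} (h : α ≤ β) : ballSlice f α ⊆ ballSlice f β :=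
  fun _ ⟨hy, hfy⟩ => ⟨hy, by linarith⟩

lemma ContinuousLinearMap.apply_le_norm_of_opNorm_le_one {f : X →L[ℝ] ℝ} (hf : ‖f‖ ≤ 1) (y : X) :
    f y ≤ ‖y‖ :=
  (le_abs_self _).trans (by simpa using f.le_of_opNorm_le hf y)

lemma ContinuousLinearMap.exists_norm_lt_one_lt_apply (f : X →L[ℝ] ℝ) {r : ℝ} (hr : r < ‖f‖) :
    ∃ y, ‖y‖ < 1 ∧ r < f y := by
  obtain ⟨y, hy, hry⟩ := f.exists_lt_apply_of_lt_opNorm hr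
  rcases le_or_gt 0 (f y) with h | h
  · exact ⟨y, hy, by rwa [Real.norm_of_nonneg h] at hry⟩
  · exact ⟨-y, by rwa [norm_neg], by rw [Real.norm_eq_abs, abs_of_neg h] at hry; simpa using hry⟩

section ProdL1

open WithLp

variable {Y : Type*} [NormedAddCommGroup Y] [NormedSpace ℝ Y]

lemma fst_mem_ballSlice_and_norm_snd_lt {f : X →L[ℝ] ℝ} (hf : ‖f‖ ≤ 1) {α : ℝ}
    {z : WithLp 1 (X × Y)} (hz : z ∈ ballSlice (f ∘L fstL 1 ℝ X Y) α) :
    z.fst ∈ ballSlice f α ∧ ‖z.snd‖ < α := by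
  obtain ⟨hz, hfz⟩ := hz
  have hfz' : 1 - α < f z.fst := hfz
  have hle := f.apply_le_norm_of_opNorm_le_one hf z.fst
  rw [prod_norm_eq_of_L1] at hz
  exact ⟨⟨by linarith [norm_nonneg z.snd], hfz'⟩, by linarith⟩

theorem IsNablaPoint.toLp_inl {x : X} (hx : IsNablaPoint x) :
    IsNablaPoint (toLp 1 (x, (0 : Y))) := by
  refine ⟨by simpa using hx.1, fun F α hF hα hxS ε hε => ?_⟩
  set f := F ∘L prodInlL 1
  set g := F ∘L prodInrL 1
  have hfg : max ‖f‖ ‖g‖ = 1 := hF ▸ (prod_opNorm_eq_max_of_L1 F).symm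
  rcases lt_or_ge (1 - min α ε) ‖g‖ with hg | hg
  · obtain ⟨v, hv, hgv⟩ := g.exists_norm_lt_one_lt_apply hg
    have hvg : g v ≤ ‖v‖ := g.apply_le_norm_of_opNorm_le_one (hfg ▸ le_max_right _ _) v
    have hdist : ‖toLp 1 (x, 0) - toLp 1 (0, v)‖ = ‖x‖ + ‖v‖ := by
      rw [← toLp_sub, prod_norm_eq_of_L1]; simp
    refine ⟨toLp 1 (0, v), ⟨by simpa using hv.le, ?_⟩, ?_⟩
    · change 1 - α < g v
      linarith [min_le_left α ε]
    · rw [hdist, hx.1]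
      linarith [min_le_right α ε]
  · have hf : ‖f‖ = 1 := by
      have hg1 : ‖g‖ < max ‖f‖ ‖g‖ := hfg ▸ by linarith [lt_min hα hε]
      rw [lt_max_iff, or_iff_left (lt_irrefl _)] at hg1
      rwa [max_eq_left hg1.le] at hfg
    obtain ⟨y, ⟨hy, hfy⟩, hxy⟩ := hx.2 f α hf hα (fun h => hxS ⟨by simpa using h.1, h.2⟩) ε hε
    exact ⟨toLp 1 (y, 0), ⟨by simpa using hy, hfy⟩, by simpa [← toLp_sub] using hxy⟩

theorem IsNablaPoint.of_toLp_inl {x : X} (hx : IsNablaPoint (toLp 1 (x, (0 : Y)))) :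
    IsNablaPoint x := by
  have hx1 : ‖x‖ = 1 := by simpa using hx.1
  refine ⟨hx1, fun f α hf hα hxS ε hε => ?_⟩
  set F := f ∘L fstL 1 ℝ X Y
  have hF : ‖F‖ = 1 := by
    have hl : F ∘L prodInlL 1 = f := by ext; simp [F]
    have hr : F ∘L prodInrL 1 = 0 := by ext; simp [F]
    rw [prod_opNorm_eq_max_of_L1, hl, hr, norm_zero, hf, max_eq_left zero_le_one]
  set β := min α (ε / 2)
  have hxS' : toLp 1 (x, 0) ∉ ballSlice F β := fun h =>
    hxS ⟨hx1.le, lt_of_le_of_lt (by linarith [min_le_left α (ε / 2)]) h.2⟩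
  obtain ⟨z, hz, hxz⟩ := hx.2 F β hF (lt_min hα (half_pos hε)) hxS' (ε / 2) (half_pos hε)
  obtain ⟨hz1, hz2⟩ := fst_mem_ballSlice_and_norm_snd_lt hf.le hz
  have hdist : ‖toLp 1 (x, 0) - z‖ = ‖x - z.fst‖ + ‖z.snd‖ := by
    rw [prod_norm_eq_of_L1]; simp
  refine ⟨z.fst, ballSlice_mono (min_le_left _ _) hz1, ?_⟩
  linarith [min_le_right α (ε / 2)]

end ProdL1

theorem isNablaPoint_iff_isNablaPoint_prodL1_general
    {X : Type*} [NormedAddCommGroup X] [NormedSpace ℝ X]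
    {Y : Type*} [NormedAddCommGroup Y] [NormedSpace ℝ Y]
    (x : X) :
    IsNablaPoint x ↔
      IsNablaPoint ((WithLp.equiv 1 (X × Y)).symm (x, 0)) :=
  ⟨IsNablaPoint.toLp_inl, IsNablaPoint.of_toLp_inl⟩

/-- `x ∈ S_X` is a `∇`-point in `X` if and only if `(x, 0)` is a `∇`-point in the
`ℓ₁`-sum `X ⊕₁ Y`. -/
theorem isNablaPoint_iff_isNablaPoint_prodL1
    {X : Type*} [NormedAddCommGroup X] [NormedSpace ℝ X] [CompleteSpace X]
    {Y : Type*} [NormedAddCommGroup Y] [NormedSpace ℝ Y] [CompleteSpace Y]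
    (x : X) (hx : ‖x‖ = 1) :
    IsNablaPoint x ↔
      IsNablaPoint ((WithLp.equiv 1 (X × Y)).symm (x, 0)) :=
  isNablaPoint_iff_isNablaPoint_prodL1_general x
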